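/- Let A be the incidence matrix of the subshift Ω_a (for a block a = (a_1,...,a_k) of positive integers) on the alphabet of admissible k-letter words, and let Â_a = Â_{a_k}···Â_{a_1} be the corresponding product of the 3×3 type-transition matrices Â_m = [[0,1,0],[m+1,0,m],[m,0,m-1]]. Then the characteristic polynomial of A equals λ^{N-3} times the characteristic polynomial of Â_a, where N is the alphabet size; in particular A and Â_a have the same spectral radius. -/

import Mathlib

open Polynomial

/-- Validity of a letter of `𝒜_m`, encoded as `(t, j) : Fin 3 × Fin (m + 2)`
where `t` is the type (`0 ↦ 𝟏`, `1 ↦ 𝟐`, `2 ↦ 𝟑`) and `j` represents the index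
`i - 1` (so `𝒜_m = {(𝟏,i) : 1 ≤ i ≤ m+1} ∪ {(𝟐,1)} ∪ {(𝟑,i) : 1 ≤ i ≤ m}`). -/
abbrev okLetter (m : ℕ) (e : Fin 3 × Fin (m + 2)) : Prop :=
  (e.1 = 0 ∧ (e.2 : ℕ) ≤ m) ∨ (e.1 = 1 ∧ (e.2 : ℕ) = 0) ∨ (e.1 = 2 ∧ (e.2 : ℕ) < m)

/-- Admissible transition from a letter of type `t` to the letter
`e ∈ 𝒜_m`: `𝟏 → (𝟐,1)`; `𝟐 → (𝟏,i), i ≤ m+1` or `(𝟑,i), i ≤ m`;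
`𝟑 → (𝟏,i), i ≤ m` or `(𝟑,i), i ≤ m-1`. -/
abbrev okTrans (m : ℕ) (t : Fin 3) (e : Fin 3 × Fin (m + 2)) : Prop :=
  (t = 0 ∧ e.1 = 1 ∧ (e.2 : ℕ) = 0) ∨
  (t = 1 ∧ ((e.1 = 0 ∧ (e.2 : ℕ) ≤ m) ∨ (e.1 = 2 ∧ (e.2 : ℕ) < m))) ∨
  (t = 2 ∧ ((e.1 = 0 ∧ (e.2 : ℕ) < m) ∨ (e.1 = 2 ∧ (e.2 : ℕ) + 1 < m)))

/-- The alphabet `A_a` of `Ω_a` for the block `a = (a₀, …, a_k)` (length `k+1`):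
admissible words `e₀ ⋯ e_k` with `e_i ∈ 𝒜_{a_i}` and admissible consecutive
transitions. -/
abbrev SturmWord (k : ℕ) (a : Fin (k + 1) → ℕ) :=
  {w : ∀ i : Fin (k + 1), Fin 3 × Fin (a i + 2) //
    (∀ i, okLetter (a i) (w i)) ∧
      ∀ i : Fin k, okTrans (a i.succ) ((w i.castSucc).1) (w i.succ)}

/-- The incidence matrix of `Ω_a`: `A v w = 1` iff the tail type of `v` may be
followed by the header of `w` (a letter of `𝒜_{a₀}`). -/
def sturmIncidence (k : ℕ) (a : Fin (k + 1) → ℕ) :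
    Matrix (SturmWord k a) (SturmWord k a) ℚ :=
  fun v w => if okTrans (a 0) ((v.1 (Fin.last k)).1) (w.1 0) then 1 else 0

/-- The 3×3 type-transition matrix `Â_m = [[0,1,0],[m+1,0,m],[m,0,m-1]]`. -/
def AhatM (m : ℕ) : Matrix (Fin 3) (Fin 3) ℚ :=
  !![0, 1, 0; (m : ℚ) + 1, 0, (m : ℚ); (m : ℚ), 0, (m : ℚ) - 1]

/-- The product `Â_a = Â_{a_k} ⋯ Â_{a₀}`. -/
def AhatProd (k : ℕ) (a : Fin (k + 1) → ℕ) : Matrix (Fin 3) (Fin 3) ℚ :=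
  (List.ofFn (fun i : Fin (k + 1) => AhatM (a i.rev))).prod


/-!
A letter of `Ω_a` (an admissible word) meets its neighbours only through the type of its last
letter and through its first letter, so the incidence matrix factors through the three types as
`A = B C`: `B` (`tailType`) records the tail type of a word, `C` (`headTrans`) which types may be
followed by its first letter. In the other order, `C B` counts words by the type preceding them
and their tail type; peeling off one letter at a time, it is the path-counting product
`Â_{a₀} ⋯ Â_{a_k}`. This product is invertible (every `Â_m` has determinant `1`), so `N ≥ 3` and
`χ_A = λ^{N-3} χ_{CB}`. Finally, one invertible `S` makes every `Â_m S` symmetric, so the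
reversed product `Â_a` is conjugate to `(C B)ᵀ`. The spectral statement follows because a power
of `λ` only adds the root `0`.
-/

open Finset Matrix

theorem List.ofFn_comp_rev {α : Type*} {n : ℕ} (f : Fin n → α) :
    List.ofFn (fun i => f i.rev) = (List.ofFn f).reverse :=
  List.ext_getElem (by simp) fun i h _ => by
    simp only [Fin.rev, List.getElem_ofFn, List.getElem_reverse, List.length_ofFn]
    congr 2
    simp only [List.length_ofFn] at h
    omega

theorem Fin.card_filter_val_eq {n c : ℕ} {p : ℕ → Prop} [DecidablePred p]
    (hp : ∀ j, p j ↔ j < c) (hc : c ≤ n) : #{x : Fin n | p x} = c := by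
  simp only [hp, Fin.card_filter_val_lt, min_eq_right hc]

theorem Fintype.sum_subtype_eq_sum_ite {ι M : Type*} [Fintype ι] [AddCommMonoid M]
    (p : ι → Prop) [DecidablePred p] (f : ι → M) :
    ∑ x : {x // p x}, f x = ∑ x, if p x then f x else 0 := by
  rw [← Finset.sum_filter, Finset.sum_subtype (p := p) (univ.filter p) (fun _ => by simp) f]

namespace Matrix

variable {n R : Type*} [Fintype n] [DecidableEq n] [CommRing R]

theorem charpoly_eq_of_mul_eq_mul {S P Q : Matrix n n R} (hS : IsUnit S) (h : S * P = Q * S) :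
    P.charpoly = Q.charpoly := by
  rw [← charpoly_units_conj hS.unit P, IsUnit.unit_spec, h, Matrix.mul_assoc,
    mul_nonsing_inv S ((isUnit_iff_isUnit_det S).1 hS), Matrix.mul_one]

theorem charpoly_list_prod_reverse {S : Matrix n n R} (hS : IsUnit S) {L : List (Matrix n n R)}
    (h : ∀ M ∈ L, S * Mᵀ = M * S) : L.reverse.prod.charpoly = L.prod.charpoly := by
  have hL : S * (L.map transpose).prod = L.prod * S := by
    induction L with
    | nil => simp
    | cons M L ih =>
      simp only [List.map_cons, List.prod_cons, List.forall_mem_cons] at h ⊢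
      rw [← Matrix.mul_assoc, h.1, Matrix.mul_assoc, ih h.2, Matrix.mul_assoc]
  rw [← charpoly_transpose, transpose_list_prod, List.map_reverse, List.reverse_reverse]
  exact charpoly_eq_of_mul_eq_mul hS hL

theorem card_le_card_of_isUnit_mul {m K : Type*} [Fintype m] [Field K] {A : Matrix n m K}
    {B : Matrix m n K} (h : IsUnit (A * B)) : Fintype.card n ≤ Fintype.card m :=
  calc Fintype.card n = (A * B).rank := (rank_of_isUnit _ h).symm
    _ ≤ A.rank := rank_mul_le_left A B
    _ ≤ Fintype.card m := rank_le_card_width A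

end Matrix

theorem sSup_norm_aeval_X_pow_mul {K : Type*} [Field K] [Algebra K ℂ] {p : K[X]}
    (hp : 0 < p.natDegree) (d : ℕ) :
    sSup {r : ℝ | ∃ z : ℂ, aeval z (X ^ d * p) = 0 ∧ r = ‖z‖}
      = sSup {r : ℝ | ∃ z : ℂ, aeval z p = 0 ∧ r = ‖z‖} := by
  set S := {r : ℝ | ∃ z : ℂ, aeval z p = 0 ∧ r = ‖z‖}
  set T := {r : ℝ | ∃ z : ℂ, aeval z (X ^ d * p) = 0 ∧ r = ‖z‖}
  obtain ⟨z₀, hz₀⟩ :=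
    IsAlgClosed.exists_aeval_eq_zero ℂ p (natDegree_pos_iff_degree_pos.1 hp).ne'
  have hS_bdd : BddAbove S := by
    refine ((p.rootSet_finite ℂ).image (‖·‖)).bddAbove.mono ?_
    rintro _ ⟨z, hz, rfl⟩
    exact ⟨z, (mem_rootSet_of_ne (ne_zero_of_natDegree_gt hp)).2 hz, rfl⟩
  have hS_sub : S ⊆ T := fun r ⟨z, hz, hr⟩ => ⟨z, by simp [hz], hr⟩
  have hT_le : ∀ r ∈ T, r ≤ sSup S := by
    rintro _ ⟨z, hz, rfl⟩
    rw [map_mul, map_pow, aeval_X, mul_eq_zero] at hz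
    rcases hz with hz | hz
    · rw [(pow_eq_zero_iff'.1 hz).1, norm_zero]
      exact (norm_nonneg z₀).trans (le_csSup hS_bdd ⟨z₀, hz₀, rfl⟩)
    · exact le_csSup hS_bdd ⟨z, hz, rfl⟩
  exact le_antisymm (csSup_le ⟨_, hS_sub ⟨z₀, hz₀, rfl⟩⟩ hT_le)
    (csSup_le_csSup ⟨_, hT_le⟩ ⟨_, z₀, hz₀, rfl⟩ hS_sub)

theorem det_AhatM (m : ℕ) : (AhatM m).det = 1 := by
  simp only [AhatM, det_fin_three, of_apply, cons_val', cons_val_zero, cons_val_one,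
    cons_val_fin_one, Matrix.cons_val]
  ring

def AhatSym : Matrix (Fin 3) (Fin 3) ℚ := !![1, 1, -1; 1, 1, 1; -1, 1, 3]

theorem isUnit_AhatSym : IsUnit AhatSym := by
  rw [isUnit_iff_isUnit_det, AhatSym, det_fin_three]
  simp only [of_apply, cons_val', cons_val_zero, cons_val_one, cons_val_two, cons_val_fin_one]
  norm_num

theorem AhatSym_mul_transpose_AhatM (m : ℕ) : AhatSym * (AhatM m)ᵀ = AhatM m * AhatSym := by
  ext i j
  fin_cases i <;> fin_cases j <;> simp [AhatSym, AhatM, mul_apply, Fin.sum_univ_three] <;> ring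

theorem charpoly_AhatProd (k : ℕ) (a : Fin (k + 1) → ℕ) :
    (AhatProd k a).charpoly = (List.ofFn fun i => AhatM (a i)).prod.charpoly := by
  rw [AhatProd, List.ofFn_comp_rev (fun i => AhatM (a i))]
  refine charpoly_list_prod_reverse isUnit_AhatSym ?_
  simp only [List.mem_ofFn, forall_exists_index]
  rintro _ i rfl
  exact AhatSym_mul_transpose_AhatM (a i)

def letterTrans (m : ℕ) : Matrix (Fin 3) (Fin 3 × Fin (m + 2)) ℚ :=
  fun t e => if okLetter m e ∧ okTrans m t e then 1 else 0

def letterType (m : ℕ) : Matrix (Fin 3 × Fin (m + 2)) (Fin 3) ℚ :=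
  fun e s => if e.1 = s then 1 else 0

theorem letterTrans_mul_letterType {m : ℕ} (hm : 1 ≤ m) :
    letterTrans m * letterType m = AhatM m := by
  ext t s
  simp only [mul_apply, letterTrans, letterType, Fintype.sum_prod_type, mul_ite, mul_one,
    mul_zero]
  rw [Finset.sum_comm]
  simp only [Finset.sum_ite_eq', Finset.mem_univ, if_true]
  fin_cases t <;> fin_cases s <;>
    simp only [okLetter, okTrans, AhatM] <;> norm_num [Fin.ext_iff, -Fin.val_eq_zero_iff]
  · exact Fin.card_filter_val_eq (p := (· = 0)) (fun _ => by omega) (by omega)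
  · rw [Fin.card_filter_val_eq (p := (· ≤ m)) (c := m + 1) (fun _ => by omega) (by omega),
      Nat.cast_succ]
  · exact Fin.card_filter_val_eq (p := (· < m)) (fun _ => by omega) (by omega)
  · exact Fin.card_filter_val_eq (p := fun j => j ≤ m ∧ j < m) (fun _ => by omega)
      (by omega)
  · rw [Fin.card_filter_val_eq (p := fun j => j < m ∧ j + 1 < m) (c := m - 1)
      (fun _ => by omega) (by omega), Nat.cast_pred hm]

theorem letterType_mul_apply {m : ℕ} {ι : Type*} (M : Matrix (Fin 3) ι ℚ)
    (e : Fin 3 × Fin (m + 2)) (j : ι) : (letterType m * M) e j = M e.1 j := by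
  simp [mul_apply, letterType]

def tailType (k : ℕ) (a : Fin (k + 1) → ℕ) : Matrix (SturmWord k a) (Fin 3) ℚ :=
  fun v s => if (v.1 (Fin.last k)).1 = s then 1 else 0

def headTrans (k : ℕ) (a : Fin (k + 1) → ℕ) : Matrix (Fin 3) (SturmWord k a) ℚ :=
  fun t w => if okTrans (a 0) t (w.1 0) then 1 else 0

theorem sturmIncidence_eq_tailType_mul_headTrans (k : ℕ) (a : Fin (k + 1) → ℕ) :
    sturmIncidence k a = tailType k a * headTrans k a := by
  ext v w
  simp only [mul_apply, tailType, headTrans, boole_mul, Finset.sum_ite_eq, Finset.mem_univ,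
    if_true, sturmIncidence]

def SturmWord.equivLetter (a : Fin 1 → ℕ) :
    SturmWord 0 a ≃ {e : Fin 3 × Fin (a 0 + 2) // okLetter (a 0) e} where
  toFun w := ⟨w.1 0, w.2.1 0⟩
  invFun e := ⟨Fin.cons e.1 finZeroElim, Fin.forall_fin_one.2 e.2, finZeroElim⟩
  left_inv w := Subtype.ext <| funext fun i => by fin_cases i; rfl
  right_inv _ := rfl

def SturmWord.consEquiv (k : ℕ) (a : Fin (k + 2) → ℕ) :
    SturmWord (k + 1) a ≃ {p : (Fin 3 × Fin (a 0 + 2)) × SturmWord k (Fin.tail a) //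
      okLetter (a 0) p.1 ∧ okTrans (Fin.tail a 0) p.1.1 (p.2.1 0)} where
  toFun w := ⟨(w.1 0, ⟨fun i => w.1 i.succ, fun i => w.2.1 i.succ, fun i => w.2.2 i.succ⟩),
    w.2.1 0, w.2.2 0⟩
  invFun p := ⟨Fin.cons p.1.1 p.1.2.1, Fin.forall_fin_succ.2 ⟨p.2.1, p.1.2.2.1⟩,
    Fin.forall_fin_succ.2 ⟨p.2.2, p.1.2.2.2⟩⟩
  left_inv w := Subtype.ext (Fin.cons_self_tail w.1)
  right_inv _ := rfl

theorem headTrans_mul_tailType_zero (a : Fin 1 → ℕ) :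
    headTrans 0 a * tailType 0 a = letterTrans (a 0) * letterType (a 0) := by
  ext t s
  rw [mul_apply, mul_apply, Fintype.sum_equiv (SturmWord.equivLetter a)
    (fun w => headTrans 0 a t w * tailType 0 a w s)
    (fun e => (if okTrans (a 0) t e.1 then 1 else 0) * letterType (a 0) e s) (fun _ => rfl),
    Fintype.sum_subtype_eq_sum_ite _
      (fun e => (if okTrans (a 0) t e then 1 else 0) * letterType (a 0) e s)]
  refine Finset.sum_congr rfl fun e _ => ?_
  simp only [letterTrans]
  split_ifs <;> simp_all

theorem headTrans_mul_tailType_succ (k : ℕ) (a : Fin (k + 2) → ℕ) :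
    headTrans (k + 1) a * tailType (k + 1) a =
      letterTrans (a 0) * letterType (a 0) *
        (headTrans k (Fin.tail a) * tailType k (Fin.tail a)) := by
  ext t s
  rw [Matrix.mul_assoc, mul_apply, mul_apply, Fintype.sum_equiv (SturmWord.consEquiv k a)
    (fun w => headTrans (k + 1) a t w * tailType (k + 1) a w s)
    (fun p => (if okTrans (a 0) t p.1.1 then 1 else 0) * tailType k (Fin.tail a) p.1.2 s)
    (fun _ => rfl), Fintype.sum_subtype_eq_sum_ite _
      (fun p : _ × SturmWord k (Fin.tail a) =>
        (if okTrans (a 0) t p.1 then 1 else 0) * tailType k (Fin.tail a) p.2 s),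
    Fintype.sum_prod_type]
  refine Finset.sum_congr rfl fun e _ => ?_
  rw [letterType_mul_apply, mul_apply, Finset.mul_sum]
  refine Finset.sum_congr rfl fun w _ => ?_
  simp only [letterTrans, headTrans]
  split_ifs <;> simp_all

theorem headTrans_mul_tailType (k : ℕ) (a : Fin (k + 1) → ℕ) :
    headTrans k a * tailType k a =
      (List.ofFn fun i => letterTrans (a i) * letterType (a i)).prod := by
  induction k with
  | zero => simp [headTrans_mul_tailType_zero]
  | succ k ih =>
    rw [headTrans_mul_tailType_succ, ih, List.ofFn_succ (n := k + 1), List.prod_cons]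
    rfl

theorem headTrans_mul_tailType_of_one_le {k : ℕ} {a : Fin (k + 1) → ℕ}
    (ha : ∀ i, 1 ≤ a i) : headTrans k a * tailType k a = (List.ofFn fun i => AhatM (a i)).prod := by
  simp only [headTrans_mul_tailType, letterTrans_mul_letterType (ha _)]

theorem three_le_card_sturmWord {k : ℕ} {a : Fin (k + 1) → ℕ} (ha : ∀ i, 1 ≤ a i) :
    3 ≤ Fintype.card (SturmWord k a) := by
  have hunit : IsUnit (headTrans k a * tailType k a) := by
    rw [headTrans_mul_tailType_of_one_le ha]
    refine List.prod_isUnit fun M hM => ?_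
    obtain ⟨i, rfl⟩ := List.mem_ofFn.1 hM
    simp [isUnit_iff_isUnit_det, det_AhatM]
  simpa using card_le_card_of_isUnit_mul hunit

/-- The characteristic polynomial of the incidence matrix `A` of `Ω_a` equals
`λ^{N-3}` times the characteristic polynomial of `Â_a = Â_{a_k} ⋯ Â_{a₀}`,
where `N` is the alphabet size; in particular `A` and `Â_a` have the same
spectral radius. -/
theorem sturmIncidence_charpoly (k : ℕ) (a : Fin (k + 1) → ℕ) (ha : ∀ i, 1 ≤ a i) :
    (sturmIncidence k a).charpoly
        = X ^ (Fintype.card (SturmWord k a) - 3) * (AhatProd k a).charpoly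
    ∧ sSup {r : ℝ | ∃ z : ℂ, aeval z (sturmIncidence k a).charpoly = 0
          ∧ r = ‖z‖}
      = sSup {r : ℝ | ∃ z : ℂ, aeval z (AhatProd k a).charpoly = 0
          ∧ r = ‖z‖} := by
  have hchar : (sturmIncidence k a).charpoly
      = X ^ (Fintype.card (SturmWord k a) - 3) * (AhatProd k a).charpoly := by
    rw [sturmIncidence_eq_tailType_mul_headTrans,
      charpoly_mul_comm_of_le _ _ (by simpa using three_le_card_sturmWord ha), Fintype.card_fin,
      headTrans_mul_tailType_of_one_le ha, charpoly_AhatProd]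
  refine ⟨hchar, ?_⟩
  rw [hchar]
  exact sSup_norm_aeval_X_pow_mul (by simp [charpoly_natDegree_eq_dim]) _
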